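/- Let f : [a,b] → ℝ be absolutely continuous with γ ≤ f′(x) ≤ Γ for a.e. x ∈ [a,b]. Then for every x ∈ [a,b], |f(x) − (1/(b−a))∫_a^b f(t) dt − ((γ+Γ)/2)(x − (a+b)/2)| ≤ (1/2)[1/4 + ((x − (a+b)/2)/(b−a))²](Γ − γ)(b − a). -/

import Mathlib

open MeasureTheory Set

theorem perturbed_ostrowski
    (a b γ Γ : ℝ) (f f' : ℝ → ℝ) (hab : a < b)
    (hderiv : ∀ x ∈ Icc a b, HasDerivAt f (f' x) x)
    (hint : IntervalIntegrable f' volume a b)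
    (hbound : ∀ᵐ x ∂volume, x ∈ Icc a b → γ ≤ f' x ∧ f' x ≤ Γ) :
    ∀ x ∈ Icc a b,
      |f x - (1 / (b - a)) * (∫ t in a..b, f t) - ((γ + Γ) / 2) * (x - (a + b) / 2)| ≤
        (1 / 2) * (1 / 4 + ((x - (a + b) / 2) / (b - a)) ^ 2) * (Γ - γ) * (b - a) := by
  intro x hx
  obtain ⟨hax, hxb⟩ := hx
  have hba : (0:ℝ) < b - a := by linarith
  have hba' : b - a ≠ 0 := ne_of_gt hba
  set M : ℝ := (γ + Γ) / 2 with hM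
  set K : ℝ := (Γ - γ) / 2 with hK
  -- γ ≤ Γ
  have hγΓ : γ ≤ Γ := by
    by_contra h
    push_neg at h
    have h2 : ∀ᵐ y ∂volume, y ∉ Icc a b := by
      filter_upwards [hbound] with y hy hmem
      have := hy hmem
      linarith [this.1, this.2]
    have h3 : volume (Icc a b) = 0 := by
      have h4 := ae_iff.mp h2
      simp only [not_not] at h4
      simpa [Icc] using h4
    rw [Real.volume_Icc] at h3
    rw [ENNReal.ofReal_eq_zero] at h3
    linarith
  have hK0 : 0 ≤ K := by rw [hK]; linarith
  -- continuity of f on Icc a b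
  have hcont : ContinuousOn f (Icc a b) :=
    fun y hy => (hderiv y hy).continuousAt.continuousWithinAt
  have hfInt : IntervalIntegrable f volume a b :=
    hcont.intervalIntegrable_of_Icc hab.le
  -- key pointwise bound
  have key : ∀ t ∈ Icc a b, |f x - f t - M * (x - t)| ≤ K * |x - t| := by
    intro t ht
    have hsub : uIcc t x ⊆ Icc a b := by
      rw [← uIcc_of_le hab.le]
      exact uIcc_subset_uIcc (by rw [uIcc_of_le hab.le]; exact ht)
        (by rw [uIcc_of_le hab.le]; exact ⟨hax, hxb⟩)
    have hsub' : uIcc t x ⊆ uIcc a b := by rwa [uIcc_of_le hab.le]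
    have hftc : ∫ s in t..x, f' s = f x - f t :=
      intervalIntegral.integral_eq_sub_of_hasDerivAt
        (fun s hs => hderiv s (hsub hs)) (hint.mono_set hsub')
    have hMint : ∫ s in t..x, (f' s - M) = f x - f t - M * (x - t) := by
      rw [intervalIntegral.integral_sub (hint.mono_set hsub')
        (intervalIntegrable_const), hftc, intervalIntegral.integral_const,
        smul_eq_mul]
      ring
    have habs : |∫ s in t..x, (f' s - M)| ≤ K * |x - t| := by
      have := intervalIntegral.norm_integral_le_of_norm_le_const_ae
        (a := t) (b := x) (C := K) (f := fun s => f' s - M) ?_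
      · simpa [Real.norm_eq_abs] using this
      · filter_upwards [hbound] with s hs hmem
        have hsI : s ∈ Icc a b := hsub (uIoc_subset_uIcc hmem)
        obtain ⟨h1, h2⟩ := hs hsI
        rw [Real.norm_eq_abs, abs_le]
        constructor <;> [skip; skip] <;> simp only [hK, hM] <;> linarith
    rwa [hMint] at habs
  -- integrability facts
  have hlinC : Continuous (fun t : ℝ => M * (x - t)) := by continuity
  have hlinInt : IntervalIntegrable (fun t : ℝ => M * (x - t)) volume a b :=
    hlinC.intervalIntegrable a b
  have hGint : IntervalIntegrable (fun t => f x - f t - M * (x - t)) volume a b :=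
    (intervalIntegrable_const.sub hfInt).sub hlinInt
  have hKC : Continuous (fun t : ℝ => K * |x - t|) :=
    continuous_const.mul ((continuous_const.sub continuous_id).abs)
  have hKInt : IntervalIntegrable (fun t : ℝ => K * |x - t|) volume a b :=
    hKC.intervalIntegrable a b
  -- value of the integral of G
  have hlin : ∫ t in a..b, M * (x - t) = M * ((b - a) * x - (b ^ 2 - a ^ 2) / 2) := by
    rw [intervalIntegral.integral_const_mul,
      intervalIntegral.integral_sub intervalIntegrable_const intervalIntegral.intervalIntegrable_id,
      intervalIntegral.integral_const, integral_id, smul_eq_mul]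
    try ring
  have hGval : ∫ t in a..b, (f x - f t - M * (x - t)) =
      (b - a) * f x - (∫ t in a..b, f t) - M * (b - a) * (x - (a + b) / 2) := by
    rw [intervalIntegral.integral_sub (intervalIntegrable_const.sub hfInt) hlinInt,
      intervalIntegral.integral_sub intervalIntegrable_const hfInt,
      intervalIntegral.integral_const, smul_eq_mul, hlin]
    ring
  -- bound the integral of |G|
  have habsInt : |∫ t in a..b, (f x - f t - M * (x - t))| ≤ ∫ t in a..b, K * |x - t| :=
    (intervalIntegral.abs_integral_le_integral_abs hab.le).trans
      (intervalIntegral.integral_mono_on hab.le hGint.abs hKInt key)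
  -- compute the majorant integral
  have e1 : ∫ t in a..x, K * |x - t| = K * (x - a) ^ 2 / 2 := by
    rw [intervalIntegral.integral_congr (g := fun t => K * (x - t))
      (fun t htt => by
        rw [uIcc_of_le hax] at htt
        simp [abs_of_nonneg (by linarith [htt.2] : (0:ℝ) ≤ x - t)])]
    rw [intervalIntegral.integral_const_mul,
      intervalIntegral.integral_sub intervalIntegrable_const intervalIntegral.intervalIntegrable_id,
      intervalIntegral.integral_const, integral_id, smul_eq_mul]
    try ring
  have e2 : ∫ t in x..b, K * |x - t| = K * (b - x) ^ 2 / 2 := by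
    rw [intervalIntegral.integral_congr (g := fun t => K * (t - x))
      (fun t htt => by
        rw [uIcc_of_le hxb] at htt
        simp only
        rw [abs_of_nonpos (by linarith [htt.1] : x - t ≤ 0)]
        ring)]
    rw [intervalIntegral.integral_const_mul,
      intervalIntegral.integral_sub intervalIntegral.intervalIntegrable_id intervalIntegrable_const,
      intervalIntegral.integral_const, integral_id, smul_eq_mul]
    try ring
  have esum : ∫ t in a..b, K * |x - t| = K * ((x - a) ^ 2 + (b - x) ^ 2) / 2 := by
    rw [← intervalIntegral.integral_add_adjacent_intervals (b := x)
      (hKInt.mono_set (by rw [uIcc_of_le hax, uIcc_of_le hab.le]; exact Icc_subset_Icc le_rfl hxb))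
      (hKInt.mono_set (by rw [uIcc_of_le hxb, uIcc_of_le hab.le]; exact Icc_subset_Icc hax le_rfl)),
      e1, e2]
    ring
  -- put everything together
  have heq : f x - (1 / (b - a)) * (∫ t in a..b, f t) - M * (x - (a + b) / 2) =
      (1 / (b - a)) * ∫ t in a..b, (f x - f t - M * (x - t)) := by
    rw [hGval]
    field_simp
  calc |f x - (1 / (b - a)) * (∫ t in a..b, f t) - M * (x - (a + b) / 2)|
      = (1 / (b - a)) * |∫ t in a..b, (f x - f t - M * (x - t))| := by
        rw [heq, abs_mul, abs_of_nonneg (by positivity : (0:ℝ) ≤ 1 / (b - a))]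
    _ ≤ (1 / (b - a)) * (K * ((x - a) ^ 2 + (b - x) ^ 2) / 2) := by
        apply mul_le_mul_of_nonneg_left (habsInt.trans_eq esum) (by positivity)
    _ = (1 / 2) * (1 / 4 + ((x - (a + b) / 2) / (b - a)) ^ 2) * (Γ - γ) * (b - a) := by
        rw [hK]
        field_simp
        ring
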